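/- arXiv:1405.2560 — 2 statements merged into one kernel-verified Lean document; each statement's English description precedes it below -/
import Mathlib

section
/- For every word w in the poset 𝒜̂ (words on positive integers in which every letter in {1,...,max(w)} occurs and the rightmost occurrence of each i < max(w) is preceded by an occurrence of i+1), we have f(g(w)) = w. -/
/-- Two lists of naturals are order-isomorphic: same length and same relative order. -/
def OrdIso (a b : List ℕ) : Prop :=
  a.length = b.length ∧
    ∀ i, i < a.length → ∀ j, j < a.length →
      (a.getD i 0 < a.getD j 0 ↔ b.getD i 0 < b.getD j 0)

instance (a b : List ℕ) : Decidable (OrdIso a b) := by unfold OrdIso; infer_instance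

/-- `σ` occurs as a pattern in `π`: some subsequence of `π` is order-isomorphic to `σ`. -/
def occursIn (σ π : List ℕ) : Prop := ∃ s ∈ π.sublists, OrdIso σ s

instance (σ π : List ℕ) : Decidable (occursIn σ π) := by unfold occursIn; infer_instance

/-- `l` is a permutation of `1, …, l.length`. -/
def IsPermList (l : List ℕ) : Prop := l.Perm ((List.range l.length).map (· + 1))

/-- The number of descents of `l` (positions `i` with `l i > l (i+1)`, 0-based). -/
def des (l : List ℕ) : ℕ :=
  ((List.range (l.length - 1)).filter (fun i => decide (l.getD (i+1) 0 < l.getD i 0))).length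

/-- `d_π(c)`: one plus the number of descents of `π` preceding the letter `c`. -/
def dval (l : List ℕ) (c : ℕ) : ℕ :=
  1 + ((List.range (l.idxOf c)).filter (fun i => decide (l.getD (i+1) 0 < l.getD i 0))).length

/-- The word `f(π) = d_π(1) d_π(2) ⋯ d_π(n)`. -/
def fword (l : List ℕ) : List ℕ := (List.range l.length).map (fun i => dval l (i+1))

/-- The largest letter of the word `w`. -/
def maxLetter (w : List ℕ) : ℕ := w.foldr max 0

/-- `p_w(j)`: positions (1-based, increasing) of the letter `j` in `w`. -/
def posList (w : List ℕ) (j : ℕ) : List ℕ :=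
  ((List.range w.length).filter (fun i => decide (w.getD i 0 = j))).map (· + 1)

/-- `g(w)`: the concatenation of the position lists `p_w(1), …, p_w(max w)`. -/
def gperm (w : List ℕ) : List ℕ := (List.range (maxLetter w)).flatMap (fun j => posList w (j+1))

/-- Membership in the poset 𝒜̂: positive letters, every letter in `{1,…,max w}` occurs,
and the rightmost occurrence of each `i < max w` is preceded by an occurrence of `i+1`. -/
def InAhat (w : List ℕ) : Prop :=
  (∀ x ∈ w, 1 ≤ x) ∧
  (∀ i, i < maxLetter w → i + 1 ∈ w) ∧
  (∀ i, i < maxLetter w - 1 → ∃ t, t < w.length ∧ w.getD t 0 = i + 1 ∧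
     (∀ s, s < w.length → t < s → w.getD s 0 ≠ i + 1) ∧ ∃ u, u < t ∧ w.getD u 0 = i + 2)

instance (w : List ℕ) : Decidable (InAhat w) := by unfold InAhat; infer_instance

/-- All permutations (as lists on `1..k`) of every length `k ≤ n`. -/
def permsUpTo (n : ℕ) : List (List ℕ) :=
  (List.range (n+1)).flatMap (fun k => ((List.range k).map (· + 1)).permutations)

/-- The interval `[a,b]` in the pattern containment poset, as a list. -/
def intervalList (a b : List ℕ) : List (List ℕ) :=
  (permsUpTo b.length).filter (fun z => decide (occursIn a z ∧ occursIn z b))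

/-- `μ` is the Möbius function of the poset of permutations under pattern containment:
`μ(a,a) = 1` and, for `a < b`, `∑_{a ≤ z ≤ b} μ(a,z) = 0`. -/
def MoebiusOn (μ : List ℕ → List ℕ → ℤ) : Prop :=
  (∀ a, μ a a = 1) ∧
  ∀ a b, IsPermList a → IsPermList b → occursIn a b → a ≠ b →
    ((intervalList a b).map (μ a)).sum = 0

/-- All lists of length `n` with entries in `{0, …, k-1}`. -/
def listsOf (n k : ℕ) : List (List ℕ) :=
  (List.range n).foldr (fun _ acc => (List.range k).flatMap (fun a => acc.map (a :: ·))) [[]]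

/-- The letters of `π` in the nonzero positions of `η`. -/
def embOcc (η π : List ℕ) : List ℕ :=
  ((List.range π.length).filter (fun i => decide (η.getD i 0 ≠ 0))).map (fun i => π.getD i 0)

/-- `η` is an embedding of `σ` in `π`: a sequence of length `|π|` whose nonzero positions
are the positions of an occurrence of `σ` in `π` and whose nonzero letters spell `σ`. -/
def IsEmbedding (η σ π : List ℕ) : Prop :=
  η.length = π.length ∧ η.filter (fun x => decide (x ≠ 0)) = σ ∧ OrdIso σ (embOcc η π)

/-- `η` is a normal embedding: nonzero at every letter of `π` lying in the tail of an
adjacency (i.e. every position whose predecessor holds the previous value). -/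
def IsNormalEmbedding (η σ π : List ℕ) : Prop :=
  IsEmbedding η σ π ∧
    ∀ i, i < π.length → 0 < i → π.getD i 0 = π.getD (i-1) 0 + 1 → η.getD i 0 ≠ 0

instance (η σ π : List ℕ) : Decidable (IsNormalEmbedding η σ π) := by
  unfold IsNormalEmbedding IsEmbedding; infer_instance

/-- The number of normal embeddings of `σ` in `π`. -/
def normalCount (σ π : List ℕ) : ℕ :=
  ((listsOf π.length (σ.length + 1)).filter (fun η => decide (IsNormalEmbedding η σ π))).length

/-- The total number of letters in all tails of all adjacencies of `π`;
equivalently, the number of adjacency pairs of `π`. -/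
def tailCount (π : List ℕ) : ℕ :=
  ((List.range π.length).filter (fun i => decide (0 < i ∧ π.getD i 0 = π.getD (i-1) 0 + 1))).length

/-- The number of occurrences of `σ` as a pattern in `π`. -/
def occCount (σ π : List ℕ) : ℕ :=
  ((List.range π.length).sublists.filter
    (fun s => decide (OrdIso σ (s.map (fun i => π.getD i 0))))).length

/-- All words of length `n` on the alphabet `{1, …, k}`. -/
def wordsOf (n k : ℕ) : List (List ℕ) := (listsOf n k).map (List.map (· + 1))

/-- All permutations of `1, …, n`, as lists. -/
def permsOfLen (n : ℕ) : List (List ℕ) := ((List.range n).map (· + 1)).permutations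

/-! `g(w)` is the concatenation of the blocks `p_w(1), …, p_w(m)`. Each block is increasing,
and since an occurrence of `j + 1` precedes an occurrence of `j`, the last entry of `p_w(j)`
exceeds the first entry of `p_w(j + 1)`. Hence the descents of `g(w)` sit exactly at the block
boundaries, and the letter `i`, which lies in the block `p_w(w_i)`, is preceded by `w_i - 1`
of them. -/

def descentsBefore (l : List ℕ) (k : ℕ) : ℕ :=
  ((List.range k).filter (fun i => decide (l.getD (i+1) 0 < l.getD i 0))).length

theorem dval_eq_one_add_descentsBefore (l : List ℕ) (c : ℕ) :
    dval l c = 1 + descentsBefore l (l.idxOf c) := rfl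

theorem descentsBefore_succ (l : List ℕ) (k : ℕ) :
    descentsBefore l (k + 1) =
      descentsBefore l k + if l.getD (k+1) 0 < l.getD k 0 then 1 else 0 := by
  simp only [descentsBefore, List.range_succ, List.filter_append, List.length_append,
    List.filter_singleton]
  by_cases h : l.getD (k+1) 0 < l.getD k 0 <;>
    simp only [h, decide_true, decide_false, cond_true, cond_false, if_true, if_false,
      List.length_singleton, List.length_nil]

theorem descentsBefore_eq_zero_of_pairwise {l : List ℕ} (hl : l.Pairwise (· < ·)) {k : ℕ}
    (hk : k < l.length) : descentsBefore l k = 0 := by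
  rw [descentsBefore, List.length_eq_zero_iff, List.filter_eq_nil_iff]
  intro i hi
  simp only [List.mem_range] at hi
  have h1 : i < l.length := by omega
  have h2 : i + 1 < l.length := by omega
  have := List.pairwise_iff_getElem.mp hl i (i+1) h1 h2 (by omega)
  simp only [List.getD_eq_getElem _ _ h1, List.getD_eq_getElem _ _ h2, decide_eq_true_eq]
  omega

theorem descentsBefore_append_of_lt (a b : List ℕ) {k : ℕ} (hk : k < a.length) :
    descentsBefore (a ++ b) k = descentsBefore a k := by
  unfold descentsBefore
  congr 1
  refine List.filter_congr fun i hi => ?_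
  simp only [List.mem_range] at hi
  rw [List.getD_append _ _ _ _ (by omega), List.getD_append _ _ _ _ (by omega)]

theorem descentsBefore_append_length_add (a b : List ℕ) (k : ℕ) :
    descentsBefore (a ++ b) (a.length + k) =
      descentsBefore (a ++ b) a.length + descentsBefore b k := by
  unfold descentsBefore
  rw [List.range_add, List.filter_append, List.length_append, List.filter_map, List.length_map]
  congr 2
  refine List.filter_congr fun i _ => ?_
  simp only [Function.comp_apply]
  rw [List.getD_append_right _ _ _ _ (by omega), List.getD_append_right _ _ _ _ (by omega),
    Nat.add_sub_cancel_left, show a.length + i + 1 - a.length = i + 1 by omega]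

theorem getD_zero_le_of_pairwise {l : List ℕ} (hl : l.Pairwise (· < ·)) {x : ℕ} (hx : x ∈ l) :
    l.getD 0 0 ≤ x := by
  cases l with
  | nil => simp at hx
  | cons y t => simpa using (hl.imp le_of_lt).rel_head hx

theorem le_getD_length_sub_one_of_pairwise {l : List ℕ} (hl : l.Pairwise (· < ·)) {x : ℕ}
    (hx : x ∈ l) : x ≤ l.getD (l.length - 1) 0 := by
  have hlast := (hl.imp le_of_lt).rel_getLast hx
  rwa [List.getLast_eq_getElem, ← List.getD_eq_getElem _ 0] at hlast

theorem descentsBefore_append_length {a b : List ℕ} (ha : a.Pairwise (· < ·)) {x : ℕ}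
    (hx : x ∈ a) (hb : b.getD 0 0 < x) : descentsBefore (a ++ b) a.length = 1 := by
  obtain ⟨m, hm⟩ : ∃ m, a.length = m + 1 := Nat.exists_eq_add_one.mpr (List.length_pos_of_mem hx)
  have hlast : (a ++ b).getD m 0 = a.getD (a.length - 1) 0 := by
    rw [List.getD_append _ _ _ _ (by omega), hm, Nat.add_sub_cancel]
  have hfirst : (a ++ b).getD (m + 1) 0 = b.getD 0 0 := by
    rw [List.getD_append_right _ _ _ _ (by omega), hm, Nat.sub_self]
  have hdesc : (a ++ b).getD (m + 1) 0 < (a ++ b).getD m 0 := by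
    rw [hlast, hfirst]
    exact hb.trans_le (le_getD_length_sub_one_of_pairwise ha hx)
  rw [hm, descentsBefore_succ, if_pos hdesc, descentsBefore_append_of_lt _ _ (by omega),
    descentsBefore_eq_zero_of_pairwise ha (by omega)]

theorem dval_flatten {L : List (List ℕ)} (hL : ∀ l ∈ L, l.Pairwise (· < ·))
    (hC : L.IsChain (fun a b => ∃ x ∈ a, ∃ y ∈ b, y < x)) {j c : ℕ}
    (hc : c ∈ L.getD j []) (hne : c ∉ (L.take j).flatten) : dval L.flatten c = j + 1 := by
  induction L generalizing j with
  | nil => simp at hc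
  | cons a L ih =>
    have ha := hL a List.mem_cons_self
    rw [List.flatten_cons, dval_eq_one_add_descentsBefore]
    cases j with
    | zero =>
      simp only [List.getD_cons_zero] at hc
      have hidx := List.idxOf_lt_length_of_mem hc
      rw [List.idxOf_append_of_mem hc, descentsBefore_append_of_lt _ _ hidx,
        descentsBefore_eq_zero_of_pairwise ha hidx]
    | succ j =>
      simp only [List.getD_cons_succ] at hc
      simp only [List.take_succ_cons, List.flatten_cons, List.mem_append, not_or] at hne
      obtain ⟨b, L, rfl⟩ : ∃ b L', L = b :: L' :=
        List.exists_cons_of_ne_nil (by rintro rfl; simp at hc)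
      obtain ⟨⟨x, hx, y, hy, hyx⟩, hC'⟩ := List.isChain_cons_cons.mp hC
      have hb := hL b (by simp)
      have hfirst : (b :: L).flatten.getD 0 0 < x := by
        rw [List.flatten_cons, List.getD_append _ _ _ _ (List.length_pos_of_mem hy)]
        exact (getD_zero_le_of_pairwise hb hy).trans_lt hyx
      have hrest := ih (fun l hl => hL l (List.mem_cons_of_mem a hl)) hC' hc hne.2
      rw [dval_eq_one_add_descentsBefore] at hrest
      rw [List.idxOf_append_of_notMem hne.1, descentsBefore_append_length_add,
        descentsBefore_append_length ha hx hfirst]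
      omega

theorem mem_posList {w : List ℕ} {j p : ℕ} :
    p ∈ posList w j ↔ ∃ i < w.length, w.getD i 0 = j ∧ p = i + 1 := by
  simp only [posList, List.mem_map, List.mem_filter, List.mem_range, decide_eq_true_eq]
  grind

theorem pairwise_posList (w : List ℕ) (j : ℕ) : (posList w j).Pairwise (· < ·) :=
  (List.pairwise_lt_range.filter _).map _ fun _ _ h => Nat.succ_lt_succ h

theorem le_maxLetter_of_mem {w : List ℕ} {x : ℕ} (hx : x ∈ w) : x ≤ maxLetter w := by
  induction w with
  | nil => simp at hx
  | cons y w ih =>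
    rcases List.mem_cons.mp hx with rfl | hx
    · exact le_max_left _ _
    · exact le_max_of_le_right (ih hx)

theorem gperm_perm_range {w : List ℕ} (hpos : ∀ x ∈ w, 1 ≤ x) :
    (gperm w).Perm ((List.range w.length).map (· + 1)) := by
  have hnodup : (gperm w).Nodup := by
    refine List.nodup_flatMap.mpr ⟨fun j _ => (pairwise_posList w _).imp ne_of_lt, ?_⟩
    refine List.nodup_range.pairwise_of_forall_ne fun j _ k _ hjk => ?_
    simp only [Function.onFun, List.disjoint_left, mem_posList]
    rintro _ ⟨i, -, hi, rfl⟩ ⟨i', -, hi', hii'⟩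
    rw [Nat.add_right_cancel hii'] at hi
    omega
  refine (List.perm_ext_iff_of_nodup hnodup
    (List.nodup_range.map (add_left_injective 1))).mpr fun p => ?_
  simp only [gperm, List.mem_flatMap, List.mem_range, mem_posList, List.mem_map]
  constructor
  · rintro ⟨j, -, i, hi, -, rfl⟩
    exact ⟨i, hi, rfl⟩
  · rintro ⟨i, hi, rfl⟩
    have hmem : w.getD i 0 ∈ w := by rw [List.getD_eq_getElem _ _ hi]; exact List.getElem_mem hi
    exact ⟨w.getD i 0 - 1, by have := le_maxLetter_of_mem hmem; have := hpos _ hmem; omega,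
      i, hi, by have := hpos _ hmem; omega, rfl⟩

theorem length_gperm {w : List ℕ} (hpos : ∀ x ∈ w, 1 ≤ x) : (gperm w).length = w.length := by
  simpa using (gperm_perm_range hpos).length_eq

theorem isChain_posList {w : List ℕ} (hw : InAhat w) :
    ((List.range (maxLetter w)).map fun j => posList w (j + 1)).IsChain
      (fun a b => ∃ x ∈ a, ∃ y ∈ b, y < x) := by
  rw [List.isChain_map]
  cases hm : maxLetter w with
  | zero => simp
  | succ m =>
    refine (List.isChain_range_succ _ m).mpr fun i hi => ?_
    obtain ⟨t, ht, hwt, -, u, hut, hwu⟩ := hw.2.2 i (by omega)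
    exact ⟨t + 1, mem_posList.mpr ⟨t, ht, hwt, rfl⟩, u + 1,
      mem_posList.mpr ⟨u, by omega, hwu, rfl⟩, by omega⟩

theorem dval_gperm {w : List ℕ} (hw : InAhat w) {i : ℕ} (hi : i < w.length) :
    dval (gperm w) (i + 1) = w[i] := by
  have hpos := hw.1 _ (List.getElem_mem hi)
  have hmax := le_maxLetter_of_mem (List.getElem_mem hi)
  have hwi : w.getD i 0 = w[i] := List.getD_eq_getElem _ _ hi
  rw [gperm, List.flatMap_def, dval_flatten (j := w[i] - 1)]
  · omega
  · simpa using fun j _ => pairwise_posList w (j + 1)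
  · exact isChain_posList hw
  · rw [List.getD_eq_getElem _ _ (by simpa using by omega)]
    simp only [List.getElem_map, List.getElem_range, mem_posList]
    exact ⟨i, hi, by omega, rfl⟩
  · simp only [← List.map_take, List.take_range, List.mem_flatten, List.mem_map, List.mem_range]
    rintro ⟨_, ⟨j, hj, rfl⟩, hmem⟩
    obtain ⟨i', -, hi', hii'⟩ := mem_posList.mp hmem
    rw [← Nat.add_right_cancel hii', hwi] at hi'
    omega

/-- for every `w ∈ 𝒜̂`, `f(g(w)) = w`. -/
theorem fword_gperm (w : List ℕ) (hw : InAhat w) : fword (gperm w) = w := by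
  have hlen := length_gperm hw.1
  refine List.ext_getElem (by simp [fword, hlen]) fun i hi hi' => ?_
  simp only [fword, List.getElem_map, List.getElem_range]
  exact dval_gperm hw hi'
end

section
/- If π is a permutation with exactly one descent, then μ(1, π) = −μ(21, π), where 1 is the permutation of length 1 and 21 the decreasing permutation of length 2. -/
/-!
Every permutation `z` with `1 ≤ z ≤ π` either contains `21` or has no descent, i.e. is an
identity `12⋯k`; the identities below `π` are exactly those below `12⋯m`, where `m` is the
length of a longest increasing subsequence of `π`. Hence `[1, π] = [21, π] ⊔ [1, 12⋯m]`.
If `π ≠ 21` has one descent, it has an ascent, so `m ≥ 2` and the defining recursion of `μ`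
over both intervals gives `∑_{z ∈ [21, π]} μ(1, z) = 0 = ∑_{z ∈ [21, π]} μ(21, z)`.
Every `z < π` in `[21, π]` again has exactly one descent, so by induction on `|π|` the two
sums cancel termwise except at `z = π`.
-/

theorem ordIso_refl (a : List ℕ) : OrdIso a a := ⟨rfl, fun _ _ _ _ => Iff.rfl⟩

theorem OrdIso.trans {a b c : List ℕ} (hab : OrdIso a b) (hbc : OrdIso b c) : OrdIso a c :=
  ⟨hab.1.trans hbc.1, fun i hi j hj =>
    (hab.2 i hi j hj).trans (hbc.2 i (hab.1 ▸ hi) j (hab.1 ▸ hj))⟩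

theorem ordIso_singleton (a b : ℕ) : OrdIso [a] [b] := by
  refine ⟨rfl, fun i hi j hj => ?_⟩
  simp only [List.length_singleton, Nat.lt_one_iff] at hi hj
  subst hi hj
  simp

theorem ordIso_pair_iff {a b c d : ℕ} :
    OrdIso [a, b] [c, d] ↔ (a < b ↔ c < d) ∧ (b < a ↔ d < c) := by
  refine ⟨fun h => ⟨h.2 0 (by simp) 1 (by simp), h.2 1 (by simp) 0 (by simp)⟩,
    fun h => ⟨rfl, fun i hi j hj => ?_⟩⟩
  simp only [List.length_cons, List.length_nil] at hi hj
  interval_cases i <;> interval_cases j <;> simp [h]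

/-- The witness `t'` is the sublist of `s` at the positions that `t` occupies in `b`. -/
theorem OrdIso.exists_sublist {b s t : List ℕ} (h : OrdIso b s) (ht : t.Sublist b) :
    ∃ t', t'.Sublist s ∧ OrdIso t t' := by
  obtain ⟨f, hf⟩ := List.sublist_iff_exists_orderEmbedding_getElem?_eq.1 ht
  have hf_lt : ∀ i < t.length, f i < b.length := fun i hi =>
    (List.getElem?_eq_some_iff.1 ((hf i).symm.trans (List.getElem?_eq_getElem hi))).1
  have hf_ge : ∀ i, t.length ≤ i → s.length ≤ f i := fun i hi => by
    rw [← h.1, ← List.getElem?_eq_none_iff, ← hf, List.getElem?_eq_none_iff]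
    exact hi
  refine ⟨(List.range t.length).map (fun i => s.getD (f i) 0),
    List.sublist_iff_exists_orderEmbedding_getElem?_eq.2 ⟨f, fun i => ?_⟩, by simp, ?_⟩
  · by_cases hi : i < t.length
    · have : f i < s.length := h.1 ▸ hf_lt i hi
      simp [hi, this]
    · simp [hi, hf_ge i (Nat.le_of_not_lt hi)]
  · intro i hi j hj
    have hgetD : ∀ k, t.getD k 0 = b.getD (f k) 0 := fun k => by
      simp only [List.getD_eq_getElem?_getD, hf k]
    rw [hgetD, hgetD]
    convert h.2 _ (hf_lt i hi) _ (hf_lt j hj) using 2 <;> simp [hi, hj]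

theorem occursIn_refl (a : List ℕ) : occursIn a a :=
  ⟨a, List.mem_sublists.2 (List.Sublist.refl a), ordIso_refl a⟩

theorem occursIn_trans {a b c : List ℕ} (hab : occursIn a b) (hbc : occursIn b c) :
    occursIn a c := by
  obtain ⟨t, ht, hat⟩ := hab
  obtain ⟨s, hs, hbs⟩ := hbc
  obtain ⟨t', ht's, htt'⟩ := hbs.exists_sublist (List.mem_sublists.1 ht)
  exact ⟨t', List.mem_sublists.2 (ht's.trans (List.mem_sublists.1 hs)), hat.trans htt'⟩

theorem length_le_of_occursIn {a b : List ℕ} (h : occursIn a b) : a.length ≤ b.length := by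
  obtain ⟨s, hs, hi⟩ := h
  exact hi.1 ▸ (List.mem_sublists.1 hs).length_le

theorem occursIn_one {z : List ℕ} (hz : z ≠ []) : occursIn [1] z := by
  obtain ⟨x, t, rfl⟩ := List.exists_cons_of_ne_nil hz
  exact ⟨[x], List.mem_sublists.2 (List.singleton_sublist.2 List.mem_cons_self),
    ordIso_singleton 1 x⟩

theorem occursIn_of_adjacent {σ l : List ℕ} {i : ℕ} (hi : i + 1 < l.length)
    (h : OrdIso σ [l.getD i 0, l.getD (i + 1) 0]) : occursIn σ l := by
  refine ⟨_, List.mem_sublists.2 ?_, h⟩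
  rw [List.getD_eq_getElem _ _ (by omega), List.getD_eq_getElem _ _ hi]
  refine List.Sublist.trans ?_ (List.drop_sublist i l)
  rw [List.drop_eq_getElem_cons (by omega), List.drop_eq_getElem_cons hi]
  exact (List.nil_sublist _).cons_cons _ |>.cons_cons _

theorem des_cons_cons (a b : ℕ) (l : List ℕ) :
    des (a :: b :: l) = (if b < a then 1 else 0) + des (b :: l) := by
  simp only [des, List.length_cons, Nat.add_sub_cancel, List.range_succ_eq_map,
    List.filter_cons, List.filter_map, List.getD_cons_succ, List.getD_cons_zero,
    Function.comp_def]
  by_cases h : b < a <;> simp [h, Nat.add_comm]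

theorem des_le_des_cons (a : ℕ) (l : List ℕ) : des l ≤ des (a :: l) := by
  cases l with
  | nil => exact Nat.zero_le _
  | cons b t => rw [des_cons_cons]; omega

/-- Deleting `b` merges the two adjacent pairs `a b` and `b c` into `a c`; if `a > c` then
`a > b` or `b > c`. -/
theorem des_cons_le_des_cons_cons (a b : ℕ) (l : List ℕ) :
    des (a :: l) ≤ des (a :: b :: l) := by
  cases l with
  | nil => exact Nat.zero_le _
  | cons c t =>
    simp only [des_cons_cons]
    split_ifs <;> omega

theorem des_cons_le_of_sublist {s l : List ℕ} (h : s.Sublist l) (a : ℕ) :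
    des (a :: s) ≤ des (a :: l) := by
  induction h generalizing a with
  | slnil => exact le_rfl
  | cons b _ ih => exact (ih a).trans (des_cons_le_des_cons_cons a b _)
  | cons_cons b _ ih =>
    rw [des_cons_cons, des_cons_cons]
    exact Nat.add_le_add_left (ih b) _

theorem des_le_of_sublist {s l : List ℕ} (h : s.Sublist l) : des s ≤ des l := by
  induction h with
  | slnil => exact le_rfl
  | cons b _ ih => exact ih.trans (des_le_des_cons b _)
  | cons_cons b h _ => exact des_cons_le_of_sublist h b

theorem OrdIso.des_eq {σ s : List ℕ} (h : OrdIso σ s) : des σ = des s := by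
  unfold des
  rw [← h.1]
  congr 1
  refine List.filter_congr fun i hi => ?_
  rw [List.mem_range] at hi
  exact decide_eq_decide.2 (h.2 (i + 1) (by omega) i (by omega))

theorem des_le_of_occursIn {σ π : List ℕ} (h : occursIn σ π) : des σ ≤ des π := by
  obtain ⟨s, hs, hi⟩ := h
  exact hi.des_eq ▸ des_le_of_sublist (List.mem_sublists.1 hs)

theorem occursIn_21_iff {z : List ℕ} : occursIn [2, 1] z ↔ 1 ≤ des z := by
  refine ⟨fun h => des_le_of_occursIn h, fun h => ?_⟩
  obtain ⟨i, hi⟩ := List.exists_mem_of_length_pos h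
  rw [List.mem_filter, List.mem_range, decide_eq_true_iff] at hi
  exact occursIn_of_adjacent (l := z) (i := i) (by omega)
    (ordIso_pair_iff.2 ⟨by omega, by omega⟩)

theorem exists_ascent_of_des_lt {l : List ℕ} (hl : l.Nodup) (h : des l < l.length - 1) :
    ∃ i, i + 1 < l.length ∧ l.getD i 0 < l.getD (i + 1) 0 := by
  by_contra! hasc
  refine h.ne ?_
  rw [des, List.filter_eq_self.2, List.length_range]
  intro i hi
  rw [List.mem_range] at hi
  have hne : l[i + 1] ≠ l[i] := fun he => by
    have := (hl.getElem_inj_iff).1 he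
    omega
  have := hasc i (by omega)
  rw [List.getD_eq_getElem _ _ (by omega), List.getD_eq_getElem _ _ (by omega)] at this ⊢
  exact decide_eq_true (lt_of_le_of_ne this hne)

theorem IsPermList.nodup {l : List ℕ} (hl : IsPermList l) : l.Nodup :=
  hl.nodup_iff.2 (List.nodup_range.map fun _ _ => Nat.add_right_cancel)

theorem length_filter_getD_range (l : List ℕ) (p : ℕ → Bool) :
    ((List.range l.length).filter (fun j => p (l.getD j 0))).length = (l.filter p).length := by
  induction l with
  | nil => rfl
  | cons x t ih =>
    simp only [List.length_cons, List.range_succ_eq_map, List.filter_cons, List.filter_map,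
      Function.comp_def, List.getD_cons_zero, List.getD_cons_succ]
    cases p x <;> simp [← ih]

/-- In a permutation of `1, …, n`, the letter `v` exceeds exactly `v - 1` letters. -/
theorem IsPermList.getElem_eq_length_filter_lt {l : List ℕ} (hl : IsPermList l) {i : ℕ}
    (hi : i < l.length) :
    l[i] = ((List.range l.length).filter (fun j => l.getD j 0 < l.getD i 0)).length + 1 := by
  obtain ⟨v, hv, hvi⟩ : ∃ v < l.length, v + 1 = l[i] := by
    simpa using hl.subset (List.getElem_mem hi)
  rw [List.getD_eq_getElem _ _ hi, length_filter_getD_range l (fun w => w < l[i]),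
    (hl.filter _).length_eq, List.filter_map, List.length_map]
  have : ((List.range l.length).filter ((fun w => decide (w < l[i])) ∘ (· + 1))) =
      (List.range l.length).filter (fun x => x < l[i] - 1) :=
    List.filter_congr fun x _ => by simp; omega
  rw [this, ← List.Ico.zero_bot, List.Ico.filter_lt, List.Ico.length]
  omega

theorem IsPermList.eq_of_ordIso {a b : List ℕ} (ha : IsPermList a) (hb : IsPermList b)
    (hab : OrdIso a b) : a = b := by
  refine List.ext_getElem hab.1 fun i hia hib => ?_
  rw [ha.getElem_eq_length_filter_lt hia, hb.getElem_eq_length_filter_lt hib, ← hab.1]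
  congr 2
  refine List.filter_congr fun j hj => ?_
  exact decide_eq_decide.2 (hab.2 j (List.mem_range.1 hj) i hia)

theorem eq_of_occursIn_of_length_eq {z π : List ℕ} (hz : IsPermList z) (hπ : IsPermList π)
    (h : occursIn z π) (hlen : z.length = π.length) : z = π := by
  obtain ⟨s, hs, hi⟩ := h
  obtain rfl : s = π := (List.mem_sublists.1 hs).eq_of_length (hi.1 ▸ hlen)
  exact hz.eq_of_ordIso hπ hi

def idPerm (k : ℕ) : List ℕ := (List.range k).map (· + 1)

theorem idPerm_length (k : ℕ) : (idPerm k).length = k := by simp [idPerm]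

theorem isPermList_idPerm (k : ℕ) : IsPermList (idPerm k) := by
  rw [IsPermList, idPerm_length]
  rfl

theorem des_idPerm (k : ℕ) : des (idPerm k) = 0 := by
  simp only [des, idPerm_length, List.length_eq_zero_iff, List.filter_eq_nil_iff, List.mem_range]
  intro i hi
  simp [idPerm, List.getD_eq_getElem?_getD, show i < k by omega, show i + 1 < k by omega]

theorem idPerm_occursIn_idPerm {k m : ℕ} (h : k ≤ m) : occursIn (idPerm k) (idPerm m) :=
  ⟨idPerm k, List.mem_sublists.2 ((List.range_sublist.2 h).map _), ordIso_refl _⟩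

theorem IsPermList.eq_idPerm_of_des_eq_zero {z : List ℕ} (hz : IsPermList z) (h : des z = 0) :
    z = idPerm z.length := by
  have hsorted : z.Pairwise (· ≤ ·) := by
    refine List.isChain_iff_pairwise.1 (List.isChain_iff_getElem.2 fun i hi => ?_)
    have hnot : i ∉ (List.range (z.length - 1)).filter
        (fun i => decide (z.getD (i + 1) 0 < z.getD i 0)) := by
      rw [List.length_eq_zero_iff.1 h]
      exact List.not_mem_nil
    simp only [List.mem_filter, List.mem_range, decide_eq_true_iff, not_and, not_lt] at hnot
    rw [List.getD_eq_getElem _ _ hi, List.getD_eq_getElem _ _ (by omega)] at hnot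
    exact hnot (by omega)
  have hsorted_id : (idPerm z.length).Pairwise (· ≤ ·) :=
    List.pairwise_lt_range.map _ fun _ _ h => by omega
  exact hz.eq_of_pairwise (fun _ _ _ _ => le_antisymm) hsorted hsorted_id

theorem mem_permsUpTo {n : ℕ} {z : List ℕ} :
    z ∈ permsUpTo n ↔ IsPermList z ∧ z.length ≤ n := by
  simp only [permsUpTo, List.mem_flatMap, List.mem_range, List.mem_permutations, IsPermList]
  constructor
  · rintro ⟨k, hk, hz⟩
    obtain rfl : z.length = k := by simpa using hz.length_eq
    exact ⟨hz, by omega⟩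
  · rintro ⟨hz, hlen⟩
    exact ⟨z.length, by omega, hz⟩

theorem nodup_permsUpTo (n : ℕ) : (permsUpTo n).Nodup := by
  refine List.nodup_flatMap.2 ⟨fun k _ => List.nodup_permutations _ (isPermList_idPerm k).nodup,
    List.pairwise_lt_range.imp fun hkk' z hz hz' => ?_⟩
  rw [List.mem_permutations] at hz hz'
  have hk := hz.length_eq
  have hk' := hz'.length_eq
  simp only [List.length_map, List.length_range] at hk hk'
  omega

theorem permsUpTo_two : permsUpTo 2 = [[], [1], [1, 2], [2, 1]] := by
  simp [permsUpTo, List.permutations, List.permutationsAux_cons, List.permutationsAux_nil,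
    List.permutationsAux2, List.range_succ]

theorem IsPermList.eq_21_of_length_eq_two {π : List ℕ} (hπ : IsPermList π)
    (hlen : π.length = 2) (hd : des π = 1) : π = [2, 1] := by
  have : π ∈ permsUpTo 2 := mem_permsUpTo.2 ⟨hπ, hlen.le⟩
  rw [permsUpTo_two] at this
  simp only [List.mem_cons, List.not_mem_nil, or_false] at this
  rcases this with rfl | rfl | rfl | rfl <;> first | rfl | (revert hlen hd; decide)

theorem mem_intervalList {a b z : List ℕ} :
    z ∈ intervalList a b ↔
      IsPermList z ∧ z.length ≤ b.length ∧ occursIn a z ∧ occursIn z b := by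
  rw [intervalList, List.mem_filter, mem_permsUpTo, decide_eq_true_iff, and_assoc]

theorem nodup_intervalList (a b : List ℕ) : (intervalList a b).Nodup :=
  (nodup_permsUpTo _).filter _

theorem isPermList_21 : IsPermList [2, 1] := List.Perm.swap 1 2 []

theorem intervalList_one_21 : intervalList [1] [2, 1] = [[1], [2, 1]] := by
  rw [intervalList, List.length_cons, List.length_singleton, permsUpTo_two]
  decide

/-- The length of a longest increasing subsequence of `π`. -/
def lisLength (π : List ℕ) : ℕ := Nat.findGreatest (fun k => occursIn (idPerm k) π) π.length

theorem idPerm_lisLength_occursIn (π : List ℕ) : occursIn (idPerm (lisLength π)) π :=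
  Nat.findGreatest_spec (P := fun k => occursIn (idPerm k) π) (Nat.zero_le _)
    ⟨[], List.mem_sublists.2 (List.nil_sublist π), ordIso_refl []⟩

theorem lisLength_le_length (π : List ℕ) : lisLength π ≤ π.length := Nat.findGreatest_le _

theorem le_lisLength_of_occursIn {π : List ℕ} {k : ℕ} (h : occursIn (idPerm k) π) :
    k ≤ lisLength π :=
  Nat.le_findGreatest (idPerm_length k ▸ length_le_of_occursIn h) h

/-- A pattern of `π` either contains `21` or is an identity `1 2 ⋯ k`, and the identities
below `π` are exactly those below `1 2 ⋯ (lisLength π)`. -/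
theorem intervalList_one_perm (π : List ℕ) :
    (intervalList [1] π).Perm
      (intervalList [2, 1] π ++ intervalList [1] (idPerm (lisLength π))) := by
  have hlis := idPerm_lisLength_occursIn π
  refine List.perm_of_nodup_nodup_toFinset_eq (nodup_intervalList _ _)
    ((nodup_intervalList _ _).append (nodup_intervalList _ _) fun z hz₁ hz₂ => ?_) ?_
  · have h1 := occursIn_21_iff.1 (mem_intervalList.1 hz₁).2.2.1
    have h0 := des_idPerm (lisLength π) ▸ des_le_of_occursIn (mem_intervalList.1 hz₂).2.2.2
    omega
  ext z
  simp only [List.mem_toFinset, List.mem_append, mem_intervalList, idPerm_length]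
  constructor
  · rintro ⟨hz, hlen, hone, hzπ⟩
    by_cases h21 : 1 ≤ des z
    · exact Or.inl ⟨hz, hlen, occursIn_21_iff.2 h21, hzπ⟩
    · have hzid := hz.eq_idPerm_of_des_eq_zero (by omega)
      have hzm := le_lisLength_of_occursIn (hzid ▸ hzπ)
      exact Or.inr ⟨hz, hzm, hone, hzid ▸ idPerm_occursIn_idPerm hzm⟩
  · rintro (⟨hz, hlen, h21, hzπ⟩ | ⟨hz, hlen, hone, hzm⟩)
    · refine ⟨hz, hlen, occursIn_one fun he => ?_, hzπ⟩
      simpa [he] using length_le_of_occursIn h21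
    · exact ⟨hz, hlen.trans (lisLength_le_length π), hone, occursIn_trans hzm hlis⟩

theorem IsPermList.two_le_lisLength {π : List ℕ} (hπ : IsPermList π) (hd : des π = 1)
    (hne : π ≠ [2, 1]) : 2 ≤ lisLength π := by
  have hlen2 : 2 ≤ π.length := length_le_of_occursIn (occursIn_21_iff.2 hd.ge)
  have hlen3 : 3 ≤ π.length :=
    lt_of_le_of_ne hlen2 fun h => hne (hπ.eq_21_of_length_eq_two h.symm hd)
  obtain ⟨i, hi, hasc⟩ := exists_ascent_of_des_lt hπ.nodup (by omega)
  exact le_lisLength_of_occursIn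
    (k := 2) (occursIn_of_adjacent (σ := [1, 2]) hi (ordIso_pair_iff.2 ⟨by omega, by omega⟩))

theorem List.sum_map_eq_single_of_nodup {α M : Type*} [AddCommMonoid M] {l : List α}
    {f : α → M} {a : α} (hl : l.Nodup) (ha : a ∈ l) (h : ∀ b ∈ l, b ≠ a → f b = 0) :
    (l.map f).sum = f a := by
  classical
  rw [← List.sum_toFinset f hl]
  exact Finset.sum_eq_single_of_mem a (List.mem_toFinset.2 ha)
    fun b hb => h b (List.mem_toFinset.1 hb)

section Moebius

variable {μ : List ℕ → List ℕ → ℤ}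

theorem MoebiusOn.one_21 (hμ : MoebiusOn μ) : μ [1] [2, 1] = -1 := by
  have h := hμ.2 [1] [2, 1] (isPermList_idPerm 1) isPermList_21
    (occursIn_one (List.cons_ne_nil _ _)) (by decide)
  rw [intervalList_one_21] at h
  simp only [List.map_cons, List.map_nil, List.sum_cons, List.sum_nil, hμ.1] at h
  linarith

theorem MoebiusOn.sum_intervalList_one (hμ : MoebiusOn μ) {π : List ℕ} (hπ : IsPermList π)
    (h : 2 ≤ π.length) : ((intervalList [1] π).map (μ [1])).sum = 0 :=
  hμ.2 [1] π (isPermList_idPerm 1) hπ (occursIn_one (List.ne_nil_of_length_pos (by omega)))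
    (ne_of_apply_ne List.length (by rw [List.length_singleton]; omega))

theorem MoebiusOn.sum_intervalList_21_one (hμ : MoebiusOn μ) {π : List ℕ} (hπ : IsPermList π)
    (h : 2 ≤ lisLength π) : ((intervalList [2, 1] π).map (μ [1])).sum = 0 := by
  have hsum := hμ.sum_intervalList_one hπ (h.trans (lisLength_le_length π))
  rwa [((intervalList_one_perm π).map (μ [1])).sum_eq, List.map_append, List.sum_append,
    hμ.sum_intervalList_one (isPermList_idPerm _) (by rwa [idPerm_length]), add_zero] at hsum

end Moebius

/-- if `π` has exactly one descent, then `μ(1,π) = -μ(21,π)`. -/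
theorem moebius_one_eq_neg_moebius_21 (μ : List ℕ → List ℕ → ℤ) (hμ : MoebiusOn μ)
    (π : List ℕ) (hπ : IsPermList π) (hd : des π = 1) :
    μ [1] π = -μ [2, 1] π := by
  induction hn : π.length using Nat.strong_induction_on generalizing π with
  | _ n ih =>
  subst hn
  by_cases h21 : π = [2, 1]
  · subst h21
    rw [hμ.one_21, hμ.1]
  have h21π : occursIn [2, 1] π := occursIn_21_iff.2 hd.ge
  have hsum_one := hμ.sum_intervalList_21_one hπ (hπ.two_le_lisLength hd h21)
  have hsum_21 := hμ.2 _ _ isPermList_21 hπ h21π (Ne.symm h21)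
  have hsum : ((intervalList [2, 1] π).map (fun z => μ [1] z + μ [2, 1] z)).sum =
      μ [1] π + μ [2, 1] π := by
    refine List.sum_map_eq_single_of_nodup (nodup_intervalList _ _)
      (mem_intervalList.2 ⟨hπ, le_rfl, h21π, occursIn_refl π⟩) fun z hz hne => ?_
    obtain ⟨hz, hzlen, hz21, hzπ⟩ := mem_intervalList.1 hz
    have hlt : z.length < π.length :=
      lt_of_le_of_ne hzlen fun h => hne (eq_of_occursIn_of_length_eq hz hπ hzπ h)
    have hdz : des z = 1 := le_antisymm (hd ▸ des_le_of_occursIn hzπ) (occursIn_21_iff.1 hz21)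
    rw [ih _ hlt z hz hdz rfl, neg_add_cancel]
  rw [List.sum_map_add, hsum_one, hsum_21] at hsum
  linarith
end
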